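/- Let J be a maximal ideal on ℕ, let δ(A) = J-lim_n |A ∩ {1,...,n}|/n, and let I = Z_δ. Then I is a translation invariant ideal and every I-almost-disjoint family is countable; in particular there is no I-TAD family of cardinality continuum. -/

import Mathlib

open Set Filter
open scoped Classical

/-- The shift of a set of naturals by an integer `k`, i.e. `(A + k) ∩ ℕ`. -/
def shiftSet (A : Set ℕ) (k : ℤ) : Set ℕ := {n : ℕ | ∃ a ∈ A, (a : ℤ) + k = (n : ℤ)}

/-- An ideal on ℕ. -/
def IsIdeal (I : Set (Set ℕ)) : Prop :=
  (∀ A B : Set ℕ, A ∈ I → B ∈ I → A ∪ B ∈ I) ∧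
  (∀ A B : Set ℕ, A ⊆ B → B ∈ I → A ∈ I) ∧
  (∀ A : Set ℕ, A.Finite → A ∈ I) ∧
  (Set.univ : Set ℕ) ∉ I

/-- A translation invariant ideal on ℕ. -/
def TransInvIdeal (I : Set (Set ℕ)) : Prop :=
  IsIdeal I ∧ ∀ A ∈ I, ∀ k : ℤ, shiftSet A k ∈ I

/-- An abstract upper density on ℕ. -/
def IsAUD (δ : Set ℕ → ℝ) : Prop :=
  (∀ A : Set ℕ, 0 ≤ δ A ∧ δ A ≤ 1) ∧
  δ Set.univ = 1 ∧
  (∀ A : Set ℕ, A.Finite → δ A = 0) ∧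
  (∀ A B : Set ℕ, A ⊆ B → δ A ≤ δ B) ∧
  (∀ A B : Set ℕ, δ (A ∪ B) ≤ δ A + δ B)

/-- A translation invariant density. -/
def TransInvAUD (δ : Set ℕ → ℝ) : Prop := ∀ (A : Set ℕ) (k : ℤ), δ (shiftSet A k) = δ A

/-- A rich density: onto [0,1]. -/
def Rich (δ : Set ℕ → ℝ) : Prop := ∀ r ∈ Set.Icc (0:ℝ) 1, ∃ A : Set ℕ, δ A = r

/-- The family of null sets of a density. -/
def ZSet (δ : Set ℕ → ℝ) : Set (Set ℕ) := {A | δ A = 0}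

/-- An `I`-almost disjoint family. -/
def IsADFamily (I : Set (Set ℕ)) (𝒜 : Set (Set ℕ)) : Prop :=
  (∀ A ∈ 𝒜, A ∉ I) ∧ ∀ A ∈ 𝒜, ∀ B ∈ 𝒜, A ≠ B → A ∩ B ∈ I

/-- An `I`-translation almost disjoint family. -/
def IsTADFamily (I : Set (Set ℕ)) (𝒜 : Set (Set ℕ)) : Prop :=
  (∀ A ∈ 𝒜, A ∉ I) ∧ ∀ A ∈ 𝒜, ∀ B ∈ 𝒜, A ≠ B → ∀ k : ℤ, A ∩ shiftSet B k ∈ I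

/-- A maximal ideal on ℕ. -/
def MaximalIdeal (I : Set (Set ℕ)) : Prop :=
  IsIdeal I ∧ ∀ J : Set (Set ℕ), IsIdeal J → I ⊆ J → I = J

/-- An ideal on a subset `X` of ℕ. -/
def IsIdealOn (X : Set ℕ) (I : Set (Set ℕ)) : Prop :=
  (∀ A ∈ I, A ⊆ X) ∧
  (∀ A B : Set ℕ, A ∈ I → B ∈ I → A ∪ B ∈ I) ∧
  (∀ A B : Set ℕ, A ⊆ B → B ∈ I → A ∈ I) ∧
  (∀ A : Set ℕ, A ⊆ X → A.Finite → A ∈ I) ∧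
  X ∉ I

/-- A maximal ideal on a subset `X` of ℕ. -/
def MaximalIdealOn (X : Set ℕ) (I : Set (Set ℕ)) : Prop :=
  IsIdealOn X I ∧ ∀ A : Set ℕ, A ⊆ X → (A ∈ I ∨ X \ A ∈ I)

/-- The translation-invariant kernel of an ideal. -/
def tIdeal (I : Set (Set ℕ)) : Set (Set ℕ) := {A | ∀ k : ℤ, shiftSet A k ∈ I}

/-- A T-maximal ideal: maximal among translation invariant ideals. -/
def TMaximalIdeal (I : Set (Set ℕ)) : Prop :=
  TransInvIdeal I ∧ ∀ J : Set (Set ℕ), TransInvIdeal J → I ⊆ J → I = J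

/-!
The limit `δ` of the finite densities along the filter dual to `J` inherits from them
nonnegativity, modularity `δ (A ∪ B) + δ (A ∩ B) = δ A + δ B` and translation invariance
(a shift by `k` changes the count in `[1, n]` by at most `|k| + 1`). In a `Z_δ`-almost disjoint
family `𝒜`, modularity gives `∑ A ∈ T, δ A ≤ δ (⋃₀ T) ≤ 1` for every finite `T ⊆ 𝒜`, so `δ` is
summable over `𝒜`; being positive on `𝒜`, it has countable support, i.e. `𝒜` is countable.
-/

open Topology

structure IsModularContent {α : Type*} (μ : Set α → ℝ) : Prop where
  empty : μ ∅ = 0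
  nonneg : ∀ s, 0 ≤ μ s
  union_add_inter : ∀ s t, μ (s ∪ t) + μ (s ∩ t) = μ s + μ t

namespace IsModularContent

variable {α ι : Type*} {μ : Set α → ℝ}

lemma union_le (hμ : IsModularContent μ) (s t : Set α) : μ (s ∪ t) ≤ μ s + μ t := by
  linarith [hμ.union_add_inter s t, hμ.nonneg (s ∩ t)]

lemma mono (hμ : IsModularContent μ) {s t : Set α} (hst : s ⊆ t) : μ s ≤ μ t := by
  have := hμ.union_add_inter s (t \ s)
  rw [union_sdiff_cancel hst, inter_sdiff_self, hμ.empty] at this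
  linarith [hμ.nonneg (t \ s)]

lemma biUnion_eq_zero (hμ : IsModularContent μ) {f : ι → Set α} (S : Finset ι)
    (hS : ∀ i ∈ S, μ (f i) = 0) : μ (⋃ i ∈ S, f i) = 0 := by
  classical
  induction S using Finset.induction_on with
  | empty => simpa using hμ.empty
  | insert a S _ ih =>
    rw [Finset.set_biUnion_insert]
    have ha := hS a (Finset.mem_insert_self a S)
    have hrest := ih fun i hi => hS i (Finset.mem_insert_of_mem hi)
    linarith [hμ.union_le (f a) (⋃ i ∈ S, f i), hμ.nonneg (f a ∪ ⋃ i ∈ S, f i)]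

lemma sum_le_biUnion (hμ : IsModularContent μ) {f : ι → Set α} (S : Finset ι)
    (hS : ∀ i ∈ S, ∀ j ∈ S, i ≠ j → μ (f i ∩ f j) = 0) :
    ∑ i ∈ S, μ (f i) ≤ μ (⋃ i ∈ S, f i) := by
  classical
  induction S using Finset.induction_on with
  | empty => simp [hμ.empty]
  | insert a S haS ih =>
    rw [Finset.set_biUnion_insert, Finset.sum_insert haS]
    have hmeet : μ (f a ∩ ⋃ i ∈ S, f i) = 0 := by
      rw [inter_iUnion₂]
      refine hμ.biUnion_eq_zero S fun i hi => hS a (Finset.mem_insert_self a S) i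
        (Finset.mem_insert_of_mem hi) (ne_of_mem_of_not_mem hi haS).symm
    have hrest := ih fun i hi j hj => hS i (Finset.mem_insert_of_mem hi) j
      (Finset.mem_insert_of_mem hj)
    linarith [hμ.union_add_inter (f a) (⋃ i ∈ S, f i)]

lemma countable_of_pairwise_null (hμ : IsModularContent μ) {𝒜 : Set (Set α)}
    (hpos : ∀ s ∈ 𝒜, μ s ≠ 0) (hnull : ∀ s ∈ 𝒜, ∀ t ∈ 𝒜, s ≠ t → μ (s ∩ t) = 0) :
    𝒜.Countable := by
  have hsum : Summable fun s : 𝒜 => μ s :=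
    summable_of_sum_le (c := μ univ) (fun s => hμ.nonneg s) fun T =>
      (hμ.sum_le_biUnion T fun s _ t _ hst => hnull s s.2 t t.2 (Subtype.coe_ne_coe.mpr hst)).trans
        (hμ.mono (subset_univ _))
  have hsupp : Function.support (fun s : 𝒜 => μ s) = univ :=
    eq_univ_of_forall fun s => hpos s s.2
  have := hsum.countable_support
  rw [hsupp, countable_univ_iff] at this
  exact countable_coe_iff.mp this

end IsModularContent

noncomputable def partialDensity (A : Set ℕ) (n : ℕ) : ℝ :=
  ((Finset.Icc 1 n).filter (· ∈ A)).card / n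

lemma partialDensity_nonneg (A : Set ℕ) (n : ℕ) : 0 ≤ partialDensity A n := by
  unfold partialDensity; positivity

lemma partialDensity_union_add_inter (A B : Set ℕ) (n : ℕ) :
    partialDensity (A ∪ B) n + partialDensity (A ∩ B) n =
      partialDensity A n + partialDensity B n := by
  have hcard := Finset.card_union_add_card_inter
    ((Finset.Icc 1 n).filter (· ∈ A)) ((Finset.Icc 1 n).filter (· ∈ B))
  rw [← Finset.filter_or, ← Finset.filter_and] at hcard
  simp only [partialDensity, ← add_div]
  congr 1
  norm_cast
  convert hcard using 3 <;> ext <;> simp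

lemma partialDensity_univ {n : ℕ} (hn : n ≠ 0) : partialDensity univ n = 1 := by
  simp [partialDensity, hn]

lemma partialDensity_le_of_finite {A : Set ℕ} (hA : A.Finite) (n : ℕ) :
    partialDensity A n ≤ hA.toFinset.card / n := by
  refine div_le_div_of_nonneg_right ?_ n.cast_nonneg
  exact_mod_cast Finset.card_le_card fun x hx => hA.mem_toFinset.mpr (Finset.mem_filter.mp hx).2

lemma card_filter_shiftSet_le (A : Set ℕ) (k : ℤ) (n : ℕ) :
    ((Finset.Icc 1 n).filter (· ∈ shiftSet A k)).card ≤
      ((Finset.Icc 1 n).filter (· ∈ A)).card + (k.natAbs + 1) := by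
  calc ((Finset.Icc 1 n).filter (· ∈ shiftSet A k)).card
      ≤ ((Finset.Icc 1 n).filter (· ∈ A) ∪ insert 0 (Finset.Ioc n (n + k.natAbs))).card := by
        refine Finset.card_le_card_of_injOn (fun x => ((x : ℤ) - k).toNat) ?_ ?_
        · intro x hx
          simp only [Finset.coe_filter, Finset.mem_Icc] at hx
          obtain ⟨⟨-, hxn⟩, a, ha, hax⟩ := hx
          have hxa : ((x : ℤ) - k).toNat = a := by omega
          simp only [Finset.coe_union, Finset.coe_filter, Finset.mem_Icc, Finset.coe_insert,
            Finset.coe_Ioc, mem_union, mem_insert_iff, mem_Ioc, hxa]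
          by_cases ha1 : 1 ≤ a ∧ a ≤ n
          · exact Or.inl ⟨ha1, ha⟩
          · right
            omega
        · intro x hx y hy hxy
          simp only [Finset.mem_coe, Finset.mem_filter] at hx hy
          obtain ⟨-, a, -, hax⟩ := hx
          obtain ⟨-, b, -, hby⟩ := hy
          simp only at hxy
          omega
    _ ≤ _ := (Finset.card_union_le _ _).trans (by
        grw [Finset.card_insert_le, Nat.card_Ioc]; omega)

lemma partialDensity_shiftSet_le (A : Set ℕ) (k : ℤ) (n : ℕ) :
    partialDensity (shiftSet A k) n ≤ partialDensity A n + (k.natAbs + 1) / n := by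
  rw [partialDensity, partialDensity, ← add_div]
  exact div_le_div_of_nonneg_right (by exact_mod_cast card_filter_shiftSet_le A k n)
    n.cast_nonneg

lemma subset_shiftSet_neg_union (A : Set ℕ) (k : ℤ) :
    A ⊆ shiftSet (shiftSet A k) (-k) ∪ Iio k.natAbs := by
  intro a ha
  by_cases hak : 0 ≤ (a : ℤ) + k
  · exact Or.inl ⟨((a : ℤ) + k).toNat, ⟨a, ha, by omega⟩, by omega⟩
  · exact Or.inr (show a < k.natAbs by omega)

lemma shiftSet_zero (A : Set ℕ) : shiftSet A 0 = A := by
  ext n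
  simp [shiftSet]

def IsDensityAlong (F : Filter ℕ) (δ : Set ℕ → ℝ) : Prop :=
  ∀ A, Tendsto (partialDensity A) F (𝓝 (δ A))

namespace IsDensityAlong

variable {F : Filter ℕ} {δ : Set ℕ → ℝ} [F.NeBot]

lemma eq_zero_of_finite (hδ : IsDensityAlong F δ) (hF : F ≤ cofinite) {A : Set ℕ}
    (hA : A.Finite) : δ A = 0 := by
  have hbound : Tendsto (fun n : ℕ => (hA.toFinset.card : ℝ) / n) F (𝓝 0) :=
    (tendsto_const_div_atTop_nhds_zero_nat _).mono_left (Nat.cofinite_eq_atTop ▸ hF)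
  exact le_antisymm (le_of_tendsto_of_tendsto' (hδ A) hbound (partialDensity_le_of_finite hA))
    (ge_of_tendsto' (hδ A) (partialDensity_nonneg A))

lemma isModularContent (hδ : IsDensityAlong F δ) (hF : F ≤ cofinite) : IsModularContent δ where
  empty := hδ.eq_zero_of_finite hF finite_empty
  nonneg A := ge_of_tendsto' (hδ A) (partialDensity_nonneg A)
  union_add_inter A B := tendsto_nhds_unique (((hδ _).add (hδ _)).congr
    (partialDensity_union_add_inter A B)) ((hδ A).add (hδ B))

lemma univ_eq_one (hδ : IsDensityAlong F δ) (hF : F ≤ cofinite) : δ univ = 1 := by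
  have hev : ∀ᶠ n in F, partialDensity univ n = 1 :=
    (eventually_cofinite_ne 0).filter_mono hF |>.mono fun n hn => partialDensity_univ hn
  exact tendsto_nhds_unique (hδ univ) (tendsto_const_nhds.congr' (hev.mono fun n hn => hn.symm))

lemma isAUD (hδ : IsDensityAlong F δ) (hF : F ≤ cofinite) : IsAUD δ := by
  have hμ := hδ.isModularContent hF
  have hone := hδ.univ_eq_one hF
  exact ⟨fun A => ⟨hμ.nonneg A, hone ▸ hμ.mono (subset_univ A)⟩, hone,
    fun A hA => hδ.eq_zero_of_finite hF hA, fun A B => hμ.mono, hμ.union_le⟩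

lemma shiftSet_le (hδ : IsDensityAlong F δ) (hF : F ≤ cofinite) (A : Set ℕ) (k : ℤ) :
    δ (shiftSet A k) ≤ δ A := by
  have herr : Tendsto (fun n : ℕ => ((k.natAbs : ℝ) + 1) / n) F (𝓝 0) :=
    (tendsto_const_div_atTop_nhds_zero_nat _).mono_left (Nat.cofinite_eq_atTop ▸ hF)
  simpa using le_of_tendsto_of_tendsto' (hδ _) ((hδ A).add herr)
    (partialDensity_shiftSet_le A k)

lemma transInvAUD (hδ : IsDensityAlong F δ) (hF : F ≤ cofinite) : TransInvAUD δ := by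
  intro A k
  have hμ := hδ.isModularContent hF
  refine le_antisymm (hδ.shiftSet_le hF A k) ?_
  calc δ A ≤ δ (shiftSet (shiftSet A k) (-k)) + δ (Iio k.natAbs) :=
        (hμ.mono (subset_shiftSet_neg_union A k)).trans (hμ.union_le _ _)
    _ = δ (shiftSet (shiftSet A k) (-k)) := by
        rw [hδ.eq_zero_of_finite hF (finite_Iio _), add_zero]
    _ ≤ δ (shiftSet A k) := hδ.shiftSet_le hF _ _

end IsDensityAlong

namespace IsIdeal

variable {J : Set (Set ℕ)}

def dualFilter (hJ : IsIdeal J) : Filter ℕ :=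
  comk (· ∈ J) (hJ.2.2.1 ∅ finite_empty) (fun t ht s hst => hJ.2.1 s t hst ht)
    (fun s hs t ht => hJ.1 s t hs ht)

lemma mem_dualFilter (hJ : IsIdeal J) {s : Set ℕ} : s ∈ hJ.dualFilter ↔ sᶜ ∈ J :=
  Iff.rfl

lemma dualFilter_neBot (hJ : IsIdeal J) : hJ.dualFilter.NeBot :=
  ⟨fun h => hJ.2.2.2 (compl_empty ▸ hJ.mem_dualFilter.mp (h ▸ mem_bot))⟩

lemma dualFilter_le_cofinite (hJ : IsIdeal J) : hJ.dualFilter ≤ cofinite :=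
  fun s hs => hJ.mem_dualFilter.mpr (hJ.2.2.1 sᶜ hs)

lemma isDensityAlong_dualFilter (hJ : IsIdeal J) {δ : Set ℕ → ℝ}
    (hδ : ∀ A : Set ℕ, ∀ ε > (0:ℝ),
      {n : ℕ | ε ≤ |((Finset.Icc 1 n).filter (· ∈ A)).card / (n:ℝ) - δ A|} ∈ J) :
    IsDensityAlong hJ.dualFilter δ := fun A =>
  Metric.tendsto_nhds.mpr fun ε hε => hJ.mem_dualFilter.mpr <| by
    simpa [partialDensity, Real.dist_eq, compl_ofPred] using hδ A ε hε

end IsIdeal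

lemma IsAUD.transInvIdeal_zSet {δ : Set ℕ → ℝ} (hδ : IsAUD δ) (hshift : TransInvAUD δ) :
    TransInvIdeal (ZSet δ) := by
  obtain ⟨hbounds, hone, hfin, hmono, hunion⟩ := hδ
  refine ⟨⟨fun A B hA hB => ?_, fun A B hAB hB => ?_, hfin, fun h => ?_⟩,
    fun A hA k => (hshift A k).trans hA⟩
  · exact le_antisymm (by linarith [hunion A B, hA.le, hB.le]) (hbounds _).1
  · exact le_antisymm (hB ▸ hmono A B hAB) (hbounds A).1
  · exact one_ne_zero (hone.symm.trans h)

lemma IsTADFamily.isADFamily {I 𝒜 : Set (Set ℕ)} (h : IsTADFamily I 𝒜) : IsADFamily I 𝒜 :=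
  ⟨h.1, fun A hA B hB hAB => shiftSet_zero B ▸ h.2 A hA B hB hAB 0⟩

theorem stmt13 (J : Set (Set ℕ)) (hJ : MaximalIdeal J) (δ : Set ℕ → ℝ)
    (hδ : ∀ A : Set ℕ, ∀ ε > (0:ℝ),
      {n : ℕ | ε ≤ |((Finset.Icc 1 n).filter (· ∈ A)).card / (n:ℝ) - δ A|} ∈ J) :
    TransInvIdeal (ZSet δ) ∧
    (∀ 𝒜 : Set (Set ℕ), IsADFamily (ZSet δ) 𝒜 → 𝒜.Countable) ∧
    ¬ ∃ 𝒜 : Set (Set ℕ), IsTADFamily (ZSet δ) 𝒜 ∧ Cardinal.mk 𝒜 = Cardinal.continuum := by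
  have hJ := hJ.1
  have := hJ.dualFilter_neBot
  have hlim := hJ.isDensityAlong_dualFilter hδ
  have hcof := hJ.dualFilter_le_cofinite
  have hcountable (𝒜 : Set (Set ℕ)) (h𝒜 : IsADFamily (ZSet δ) 𝒜) : 𝒜.Countable :=
    (hlim.isModularContent hcof).countable_of_pairwise_null h𝒜.1 h𝒜.2
  refine ⟨(hlim.isAUD hcof).transInvIdeal_zSet (hlim.transInvAUD hcof), hcountable, ?_⟩
  rintro ⟨𝒜, h𝒜, hcard⟩
  exact (hcard ▸ (hcountable 𝒜 h𝒜.isADFamily).le_aleph0).not_gt Cardinal.aleph0_lt_continuum
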